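/- (Correctness of the two-step synthesis procedure.) In a finite turn-based game arena, let B ⊆ S, let Win_safe be the greatest Player-1 safe-closed set within B, and define π_safe(s) = { a ∈ A | T(s,a) ∈ Win_safe } for s ∈ Win_safe ∩ S₁. Let G ⊆ Win_safe, and let Ẑ be the attractor of G for Player 1 in the subgame where Player 1's actions at each s ∈ Win_safe ∩ S₁ are restricted to π_safe(s): Ẑ₀ = G, Ẑ_{k+1} = Ẑ_k ∪ { s ∈ Win_safe ∩ S₁ | ∃ a ∈ π_safe(s), T(s,a) ∈ Ẑ_k } ∪ { s ∈ Win_safe ∩ S₂ | ∀ a ∈ A, T(s,a) ∈ Ẑ_k }, with Ŵin = ⋃_k Ẑ_k. Then for every s₀ ∈ Ŵin there exists a memoryless Player-1 strategy π : S₁ → A with π(s) ∈ π_safe(s) for all s ∈ Win_safe ∩ S₁ such that every play from s₀ consistent with π (Player 2 arbitrary) remains in Win_safe ⊆ B forever AND visits G; i.e., Player 1 simultaneously wins the safety objective 'always B' and the co-safe objective 'eventually G'. -/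
import Mathlib


/-- `W` is Player-1 safe-closed within `B`. -/
def SafeClosed {S A : Type*} (S1 S2 : Set S) (T : S → A → S) (B W : Set S) : Prop :=
  W ⊆ B ∧ (∀ s ∈ W ∩ S1, ∃ a : A, T s a ∈ W) ∧ (∀ s ∈ W ∩ S2, ∀ a : A, T s a ∈ W)

/-- Player 1's attractor sequence of `G` in the subgame where Player 1's actions at
`WinSafe ∩ S₁` are restricted to the safe actions `π_safe(s) = {a | T s a ∈ WinSafe}`:
`Ẑ₀ = G`, and `Ẑ_{k+1} = Ẑ_k ∪ {s ∈ WinSafe ∩ S₁ | ∃ a ∈ π_safe(s), T s a ∈ Ẑ_k}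
∪ {s ∈ WinSafe ∩ S₂ | ∀ a, T s a ∈ Ẑ_k}`. -/
def attrSeqSafeRestr {S A : Type*} (S1 S2 : Set S) (T : S → A → S)
    (WinSafe G : Set S) : ℕ → Set S
  | 0 => G
  | k + 1 =>
      attrSeqSafeRestr S1 S2 T WinSafe G k ∪
        {s | s ∈ WinSafe ∩ S1 ∧
          ∃ a ∈ {a : A | T s a ∈ WinSafe}, T s a ∈ attrSeqSafeRestr S1 S2 T WinSafe G k} ∪
        {s | s ∈ WinSafe ∩ S2 ∧ ∀ a : A, T s a ∈ attrSeqSafeRestr S1 S2 T WinSafe G k}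

/-- Correctness of the two-step synthesis procedure: from any state of the attractor of
`G` computed in the safe subgame, Player 1 has a memoryless strategy, taking only safe
actions at `WinSafe ∩ S₁`, that keeps every play in `WinSafe ⊆ B` forever and also forces
a visit to `G`; i.e., Player 1 wins the safety objective "always `B`" and the co-safe
objective "eventually `G`" simultaneously. -/
theorem two_step_synthesis_correct {S A : Type*} [Fintype S] [Nonempty S]
    [Fintype A] [Nonempty A] (S1 S2 : Set S)
    (hpart : S1 ∪ S2 = Set.univ) (hdisj : Disjoint S1 S2)
    (T : S → A → S) (B : Set S) (WinSafe : Set S)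
    (hclosed : SafeClosed S1 S2 T B WinSafe)
    (hgreatest : ∀ W : Set S, SafeClosed S1 S2 T B W → W ⊆ WinSafe)
    (G : Set S) (hG : G ⊆ WinSafe) :
    ∀ s₀ ∈ ⋃ k : ℕ, attrSeqSafeRestr S1 S2 T WinSafe G k,
      ∃ π : S → A,
        (∀ s ∈ WinSafe ∩ S1, π s ∈ {a : A | T s a ∈ WinSafe}) ∧
        ∀ play : ℕ → S, play 0 = s₀ →
          (∀ i : ℕ, ∃ a : A, T (play i) a = play (i + 1)) →
          (∀ i : ℕ, play i ∈ S1 → play (i + 1) = T (play i) (π (play i))) →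
          (∀ i : ℕ, play i ∈ WinSafe ∧ play i ∈ B) ∧ (∃ i : ℕ, play i ∈ G) := by
  classical
  set Z := attrSeqSafeRestr S1 S2 T WinSafe G with hZdef
  have hZsucc : ∀ k, Z (k + 1) =
      Z k ∪ {s | s ∈ WinSafe ∩ S1 ∧ ∃ a ∈ {a : A | T s a ∈ WinSafe}, T s a ∈ Z k} ∪
        {s | s ∈ WinSafe ∩ S2 ∧ ∀ a : A, T s a ∈ Z k} := fun k => rfl
  have hZWin : ∀ k, Z k ⊆ WinSafe := by
    intro k
    induction k with
    | zero => exact hG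
    | succ k ih =>
      rw [hZsucc]
      rintro s ((hs | hs) | hs)
      · exact ih hs
      · exact hs.1.1
      · exact hs.1.1
  have hmono : ∀ k, Z k ⊆ Z (k + 1) := by
    intro k; rw [hZsucc]; intro s hs; exact Or.inl (Or.inl hs)
  have hmono' : ∀ {k k' : ℕ}, k ≤ k' → Z k ⊆ Z k' := by
    intro k k' h
    induction h with
    | refl => exact subset_rfl
    | step h ih => exact Set.Subset.trans ih (hmono _)
  have hdet : ∀ {s : S} {k k' : ℕ}, s ∈ Z (k + 1) → s ∉ Z k → s ∈ Z (k' + 1) → s ∉ Z k' →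
      k' = k := by
    intro s k k' h1 h0 h1' h0'
    rcases lt_trichotomy k k' with h | h | h
    · exact absurd (hmono' h h1) h0'
    · exact h.symm
    · exact absurd (hmono' h h1') h0
  set good : S → A → Prop := fun s a =>
    T s a ∈ WinSafe ∧ ∀ k, s ∈ Z (k + 1) → s ∉ Z k → T s a ∈ Z k with hgooddef
  have hex : ∀ s ∈ WinSafe ∩ S1, ∃ a, good s a := by
    intro s hs
    by_cases h : ∃ k, s ∈ Z (k + 1) ∧ s ∉ Z k
    · obtain ⟨k, hk1, hk0⟩ := h
      have hmem : s ∈ WinSafe ∩ S1 ∧ ∃ a ∈ {a : A | T s a ∈ WinSafe}, T s a ∈ Z k := by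
        have h' := hk1
        rw [hZsucc] at h'
        rcases h' with (h' | h') | h'
        · exact absurd h' hk0
        · exact h'
        · exact absurd h'.1.2 (Set.disjoint_left.mp hdisj hs.2)
      obtain ⟨-, a, ha1, ha2⟩ := hmem
      refine ⟨a, ha1, fun k' h1 h0 => ?_⟩
      rw [hdet hk1 hk0 h1 h0]
      exact ha2
    · obtain ⟨a, ha⟩ := hclosed.2.1 s hs
      exact ⟨a, ha, fun k h1 h0 => absurd ⟨k, h1, h0⟩ h⟩
  set π : S → A := fun s => if h : ∃ a, good s a then h.choose else Classical.arbitrary A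
    with hπdef
  have hπgood : ∀ s, (∃ a, good s a) → good s (π s) := by
    intro s h
    rw [hπdef]
    simp only [dif_pos h]
    exact h.choose_spec
  have P1 : ∀ s ∈ WinSafe ∩ S1, T s (π s) ∈ WinSafe := fun s hs => (hπgood s (hex s hs)).1
  have P2 : ∀ (s : S) (k : ℕ), s ∈ S1 → s ∈ Z (k + 1) → s ∉ Z k → T s (π s) ∈ Z k := by
    intro s k hs1 h1 h0
    exact (hπgood s (hex s ⟨hZWin (k + 1) h1, hs1⟩)).2 k h1 h0
  intro s₀ hs₀
  obtain ⟨k₀, hk₀⟩ := Set.mem_iUnion.mp hs₀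
  refine ⟨π, fun s hs => P1 s hs, ?_⟩
  intro play hp0 hsteps hcons
  have hsafe : ∀ i, play i ∈ WinSafe := by
    intro i
    induction i with
    | zero => rw [hp0]; exact hZWin k₀ hk₀
    | succ i ih =>
      have hmem : play i ∈ S1 ∪ S2 := by rw [hpart]; trivial
      rcases hmem with h1 | h2
      · rw [hcons i h1]
        exact P1 _ ⟨ih, h1⟩
      · obtain ⟨a, ha⟩ := hsteps i
        rw [← ha]
        exact hclosed.2.2 _ ⟨ih, h2⟩ a
  refine ⟨fun i => ⟨hsafe i, hclosed.1 (hsafe i)⟩, ?_⟩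
  have key : ∀ (k : ℕ) (i : ℕ), play i ∈ Z k → ∃ j, play j ∈ G := by
    intro k
    induction k with
    | zero => exact fun i hi => ⟨i, hi⟩
    | succ k ih =>
      intro i hi
      by_cases h0 : play i ∈ Z k
      · exact ih i h0
      · have hmem : play i ∈ S1 ∪ S2 := by rw [hpart]; trivial
        rcases hmem with h1 | h2
        · have := P2 (play i) k h1 hi h0
          rw [← hcons i h1] at this
          exact ih (i + 1) this
        · have h' := hi
          rw [hZsucc] at h'
          rcases h' with (h' | h') | h'
          · exact absurd h' h0
          · exact absurd h'.1.2 (Set.disjoint_left.mp hdisj.symm h2)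
          · obtain ⟨a, ha⟩ := hsteps i
            exact ih (i + 1) (ha ▸ h'.2 a)
  exact key k₀ 0 (hp0.symm ▸ hk₀)
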